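/- arXiv:2410.23574 — 2 statements merged into one kernel-verified Lean document; each statement's English description precedes it below -/
import Mathlib

section
/- Descent inequality for projected gradient steps with an inexact gradient: Let C : ℝ^n → ℝ be differentiable with β′-Lipschitz gradient and μ-strongly convex (μ > 0). Let X ⊆ ℝ^n be nonempty, closed and convex, let x, g ∈ ℝ^n, and set x⁺ = Π_X(x − (1/β′)g). Then for every y ∈ X, C(x⁺) − C(y) ≤ β′⟨x − x⁺, x − y⟩ − (β′/2)‖x⁺ − x‖² − (μ/2)‖x − y‖² + ⟨∇C(x) − g, x⁺ − y⟩. (This is inequality (B.1) underlying Theorem 2 of the paper.) -/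
/-!
The descent lemma bounds `C x⁺` above by the linearization of `C` at `x` plus
`(β′/2)‖x⁺ − x‖²`, strong convexity bounds `C y` below by the same linearization plus
`(μ/2)‖x − y‖²`, and the variational inequality of the projection trades `⟨g, x⁺ − y⟩` for
`β′⟨x − x⁺, x⁺ − y⟩`. Adding the three and using
`⟨x − x⁺, x − y⟩ − ⟨x − x⁺, x⁺ − y⟩ = ‖x⁺ − x‖²` gives the claim. Multiplying the variational
inequality by `β′` needs `β′ > 0`, which holds because comparing the two quadratic bounds
forces `μ ≤ β′` as soon as the space is nonzero.
-/

open scoped RealInnerProductSpace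

open Set AffineMap

theorem ConvexOn.add_apply_sub_le_of_hasFDerivAt {E : Type*} [NormedAddCommGroup E]
    [NormedSpace ℝ E] {f : E → ℝ} {f' : E →L[ℝ] ℝ} {a : E} (hc : ConvexOn ℝ univ f)
    (hf : HasFDerivAt f f' a) (b : E) : f a + f' (b - a) ≤ f b := by
  have hline : ConvexOn ℝ univ fun t : ℝ ↦ f (lineMap a b t) := by
    have h := hc.comp_affineMap (lineMap a b : ℝ →ᵃ[ℝ] E)
    rwa [preimage_univ] at h
  have hderiv : HasDerivAt (fun t : ℝ ↦ f (lineMap a b t)) (f' (b - a)) 0 :=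
    (by simpa using hf : HasFDerivAt f f' (lineMap a b (0 : ℝ))).comp_hasDerivAt 0
      hasDerivAt_lineMap
  have := hline.le_slope_of_hasDerivAt (mem_univ 0) (mem_univ 1) one_pos hderiv
  simp only [slope_def_field, lineMap_apply_zero, lineMap_apply_one, sub_zero, div_one] at this
  linarith

section InnerProductSpace

variable {F : Type*} [NormedAddCommGroup F] [InnerProductSpace ℝ F]

theorem Convex.inner_sub_nonpos_of_forall_norm_sub_le {K : Set F} (hK : Convex ℝ K)
    {w p : F} (hp : p ∈ K) (hmin : ∀ z ∈ K, ‖p - w‖ ≤ ‖z - w‖) :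
    ∀ z ∈ K, ⟪w - p, z - p⟫ ≤ 0 := by
  have : Nonempty K := ⟨⟨p, hp⟩⟩
  refine (norm_eq_iInf_iff_real_inner_le_zero hK hp).mp (le_antisymm ?_ ?_)
  · exact le_ciInf fun z ↦ by rw [norm_sub_rev, norm_sub_rev w]; exact hmin z z.2
  · refine ciInf_le ⟨0, ?_⟩ (⟨p, hp⟩ : K)
    rintro _ ⟨z, rfl⟩
    positivity

theorem Convex.inner_le_of_projected_gradient_step {K : Set F} (hK : Convex ℝ K)
    {x g p : F} {β : ℝ} (hβ : 0 < β) (hp : p ∈ K)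
    (hmin : ∀ z ∈ K, ‖p - (x - (1 / β) • g)‖ ≤ ‖z - (x - (1 / β) • g)‖) {y : F} (hy : y ∈ K) :
    ⟪g, p - y⟫ ≤ β * ⟪x - p, p - y⟫ := by
  have hvi := hK.inner_sub_nonpos_of_forall_norm_sub_le hp hmin y hy
  rw [sub_right_comm, inner_sub_left, real_inner_smul_left, ← neg_sub p y, inner_neg_right,
    inner_neg_right] at hvi
  field_simp at hvi
  linarith

variable [CompleteSpace F] {f : F → ℝ}

theorem StrongConvexOn.add_inner_gradient_add_sq_le {μ : ℝ} {a : F}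
    (hsc : StrongConvexOn univ μ f) (hf : DifferentiableAt ℝ f a) (b : F) :
    f a + ⟪gradient f a, b - a⟫ + μ / 2 * ‖b - a‖ ^ 2 ≤ f b := by
  have hφ := (hf.hasFDerivAt.sub ((hasStrictFDerivAt_norm_sq a).hasFDerivAt.const_mul (μ / 2)))
  have := (strongConvexOn_iff_convex.mp hsc).add_apply_sub_le_of_hasFDerivAt hφ b
  simp only [FunLike.coe_sub, FunLike.coe_smul, Pi.sub_apply, Pi.smul_apply, smul_eq_mul,
    innerSL_apply_apply] at this
  rw [inner_sub_right, real_inner_self_eq_norm_sq] at this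
  rw [inner_gradient_left, norm_sub_sq_real, real_inner_comm]
  linear_combination this

theorem le_add_inner_gradient_add_sq_of_lipschitz_gradient {β : ℝ} (hf : Differentiable ℝ f)
    (hlip : ∀ z w, ‖gradient f z - gradient f w‖ ≤ β * ‖z - w‖) (a b : F) :
    f b ≤ f a + ⟪gradient f a, b - a⟫ + β / 2 * ‖b - a‖ ^ 2 := by
  set G : ℝ → ℝ := fun t ↦
    f (lineMap a b t) - t * ⟪gradient f a, b - a⟫ - β / 2 * ‖b - a‖ ^ 2 * t ^ 2
  have hG (t : ℝ) : HasDerivAt G (⟪gradient f (lineMap a b t) - gradient f a, b - a⟫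
      - β * ‖b - a‖ ^ 2 * t) t := by
    have hline : HasDerivAt (fun s : ℝ ↦ f (lineMap a b s))
        ⟪gradient f (lineMap a b t), b - a⟫ t := by
      rw [inner_gradient_left]
      exact (hf _).hasFDerivAt.comp_hasDerivAt t hasDerivAt_lineMap
    refine ((hline.sub ((hasDerivAt_id t).mul_const _)).sub
      ((hasDerivAt_pow 2 t).const_mul (β / 2 * ‖b - a‖ ^ 2))).congr_deriv ?_
    rw [inner_sub_left]
    ring
  have hG' (t : ℝ) (ht : 0 ≤ t) :
      ⟪gradient f (lineMap a b t) - gradient f a, b - a⟫ ≤ β * ‖b - a‖ ^ 2 * t :=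
    calc ⟪gradient f (lineMap a b t) - gradient f a, b - a⟫
        ≤ ‖gradient f (lineMap a b t) - gradient f a‖ * ‖b - a‖ := real_inner_le_norm _ _
      _ ≤ β * ‖lineMap a b t - a‖ * ‖b - a‖ := by gcongr; exact hlip _ _
      _ = β * ‖b - a‖ ^ 2 * t := by
        rw [lineMap_apply_module', add_sub_cancel_right, norm_smul, Real.norm_of_nonneg ht]
        ring
  have hanti : AntitoneOn G (Icc 0 1) :=
    antitoneOn_of_hasDerivWithinAt_nonpos (convex_Icc 0 1)
      (fun t _ ↦ (hG t).continuousAt.continuousWithinAt)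
      (fun t _ ↦ (hG t).hasDerivWithinAt)
      (fun t ht ↦ by
        rw [interior_Icc] at ht
        linarith [hG' t ht.1.le])
  have h01 := hanti (left_mem_Icc.mpr zero_le_one) (right_mem_Icc.mpr zero_le_one) zero_le_one
  simp only [G, lineMap_apply_zero, lineMap_apply_one] at h01
  linarith

theorem StrongConvexOn.le_of_lipschitz_gradient [Nontrivial F] {μ β : ℝ}
    (hsc : StrongConvexOn univ μ f) (hf : Differentiable ℝ f)
    (hlip : ∀ z w, ‖gradient f z - gradient f w‖ ≤ β * ‖z - w‖) : μ ≤ β := by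
  obtain ⟨v, hv⟩ := exists_ne (0 : F)
  have hlower := hsc.add_inner_gradient_add_sq_le (hf 0) v
  have hupper := le_add_inner_gradient_add_sq_of_lipschitz_gradient hf hlip 0 v
  have hpos : 0 < ‖v - 0‖ ^ 2 := by rw [sub_zero]; positivity
  nlinarith

end InnerProductSpace

theorem inexact_pgd_descent_general {n : ℕ} (C : EuclideanSpace ℝ (Fin n) → ℝ) (β' μ : ℝ)
    (hμ : 0 < μ) (hdiff : Differentiable ℝ C)
    (hlip : ∀ z w, ‖gradient C z - gradient C w‖ ≤ β' * ‖z - w‖)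
    (hsc : ConvexOn ℝ Set.univ (fun z => C z - μ / 2 * ‖z‖ ^ 2))
    (X : Set (EuclideanSpace ℝ (Fin n)))
    (hXconv : Convex ℝ X)
    (x g : EuclideanSpace ℝ (Fin n))
    (proj : EuclideanSpace ℝ (Fin n) → EuclideanSpace ℝ (Fin n))
    (hproj : ∀ w, proj w ∈ X ∧ ∀ z ∈ X, ‖proj w - w‖ ≤ ‖z - w‖)
    (xplus : EuclideanSpace ℝ (Fin n)) (hxplus : xplus = proj (x - (1 / β') • g)) :
    ∀ y ∈ X,
      C xplus - C y ≤
        β' * ⟪x - xplus, x - y⟫ - β' / 2 * ‖xplus - x‖ ^ 2 - μ / 2 * ‖x - y‖ ^ 2 +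
          ⟪gradient C x - g, xplus - y⟫ := by
  intro y hy
  rcases subsingleton_or_nontrivial (EuclideanSpace ℝ (Fin n)) with _ | _
  · simp [Subsingleton.elim xplus y, Subsingleton.elim x y]
  have hsc' : StrongConvexOn univ μ C := strongConvexOn_iff_convex.mpr hsc
  have hβ : 0 < β' := hμ.trans_le (hsc'.le_of_lipschitz_gradient hdiff hlip)
  obtain ⟨hxplusX, hxplusmin⟩ := hxplus ▸ hproj (x - (1 / β') • g)
  have hstep := hXconv.inner_le_of_projected_gradient_step hβ hxplusX hxplusmin hy
  have hdescent := le_add_inner_gradient_add_sq_of_lipschitz_gradient hdiff hlip x xplus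
  have hstrong := hsc'.add_inner_gradient_add_sq_le (hdiff x) y
  have hgrad : ⟪gradient C x, xplus - x⟫ - ⟪gradient C x, y - x⟫ = ⟪gradient C x, xplus - y⟫ := by
    rw [← inner_sub_right, sub_sub_sub_cancel_right]
  have hsq : ⟪x - xplus, x - y⟫ - ⟪x - xplus, xplus - y⟫ = ‖xplus - x‖ ^ 2 := by
    rw [← inner_sub_right, sub_sub_sub_cancel_right, real_inner_self_eq_norm_sq, norm_sub_rev]
  rw [norm_sub_rev y x] at hstrong
  rw [inner_sub_left (gradient C x)]
  linear_combination hdescent + hstrong + hstep + hgrad - β' * hsq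

/-- Descent inequality for a projected gradient step with an inexact
gradient: if `C` is differentiable with `β′`-Lipschitz gradient and `μ`-strongly convex
(`μ > 0`), `X` is nonempty closed convex, and `x⁺ = Π_X(x − (1/β′)g)`, then for every
`y ∈ X`,
`C(x⁺) − C(y) ≤ β′⟨x − x⁺, x − y⟩ − (β′/2)‖x⁺ − x‖² − (μ/2)‖x − y‖²
  + ⟨∇C(x) − g, x⁺ − y⟩`. -/
theorem inexact_pgd_descent {n : ℕ} (C : EuclideanSpace ℝ (Fin n) → ℝ) (β' μ : ℝ)
    (hμ : 0 < μ) (hdiff : Differentiable ℝ C)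
    (hlip : ∀ z w, ‖gradient C z - gradient C w‖ ≤ β' * ‖z - w‖)
    (hsc : ConvexOn ℝ Set.univ (fun z => C z - μ / 2 * ‖z‖ ^ 2))
    (X : Set (EuclideanSpace ℝ (Fin n)))
    (hXne : X.Nonempty) (hXcl : IsClosed X) (hXconv : Convex ℝ X)
    (x g : EuclideanSpace ℝ (Fin n))
    (proj : EuclideanSpace ℝ (Fin n) → EuclideanSpace ℝ (Fin n))
    (hproj : ∀ w, proj w ∈ X ∧ ∀ z ∈ X, ‖proj w - w‖ ≤ ‖z - w‖)
    (xplus : EuclideanSpace ℝ (Fin n)) (hxplus : xplus = proj (x - (1 / β') • g)) :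
    ∀ y ∈ X,
      C xplus - C y ≤
        β' * ⟪x - xplus, x - y⟫ - β' / 2 * ‖xplus - x‖ ^ 2 - μ / 2 * ‖x - y‖ ^ 2 +
          ⟪gradient C x - g, xplus - y⟫ :=
  inexact_pgd_descent_general C β' μ hμ hdiff hlip hsc X hXconv x g proj hproj xplus hxplus
end

section
/- Linear convergence of projected inexact gradient descent (deterministic core of Theorem 2): Let C : ℝ^n → ℝ be differentiable with β′-Lipschitz gradient and μ-strongly convex, where 0 < μ < β′, and set γ = μ/(β′ − μ). Let X ⊆ ℝ^n be nonempty, closed and convex, let x⁰ ∈ X, x* ∈ X, ε ≥ 0, and for j = 0, …, K − 1 let g^j ∈ ℝ^n and x^{j+1} = Π_X(x^j − (1/β′)g^j). If for every j we have ⟨∇C(x^j) − g^j, x^{j+1} − x^j⟩ ≤ ε and ⟨∇C(x^j) − g^j, x^{j+1} − x*⟩ ≤ ε, then C(x^K) − C(x*) ≤ (1/(1 + γ))^K·(C(x⁰) − C(x*)) + ((1 + γ)/γ)·ε. -/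
/-!
Write `ρ = 1 - μ/β' = 1/(1 + γ)`. One step from `q ∈ X` to `p = Π_X(q - g/β')` satisfies
`C p - C x* ≤ ρ (C q - C x*) + ε`: compare `p` with the point `z = q + (μ/β')(x* - q)` of `X`.
The descent lemma and the variational inequality of the projection bound `C p` by the quadratic
model `C q + ⟪∇C q, z - q⟫ + β'/2 ‖z - q‖²` plus the error `⟪∇C q - g, p - z⟫`. Since `z - q` is
`μ/β'` times `x* - q`, the quadratic term is exactly the one strong convexity at `q` pays for, so
the model is at most `ρ C q + (μ/β') C x*`, while the error is a convex combination of the two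
assumed error bounds. Unrolling `a_{j+1} ≤ ρ a_j + ε` gives `a_K ≤ ρ^K a_0 + ε/(1 - ρ)`, and
`ε/(1 - ρ) = (β'/μ) ε = ((1 + γ)/γ) ε`.
-/

open scoped RealInnerProductSpace

theorem le_pow_mul_add_of_forall_le_mul_add {a : ℕ → ℝ} {ρ c : ℝ} (hρ : 0 ≤ ρ) (hc : 0 ≤ c)
    {K : ℕ} (h : ∀ j < K, a (j + 1) ≤ ρ * a j + (1 - ρ) * c) : a K ≤ ρ ^ K * a 0 + c := by
  suffices a K - c ≤ ρ ^ K * (a 0 - c) by linarith [mul_nonneg (pow_nonneg hρ K) hc]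
  induction K with
  | zero => simp
  | succ K ih =>
    have ih := ih fun j hj => h j (by omega)
    calc a (K + 1) - c ≤ ρ * (a K - c) := by linarith [h K K.lt_succ_self]
      _ ≤ ρ * (ρ ^ K * (a 0 - c)) := by gcongr
      _ = ρ ^ (K + 1) * (a 0 - c) := by ring

theorem ConvexOn.add_fderiv_sub_le_of_hasFDerivAt {E : Type*} [NormedAddCommGroup E]
    [NormedSpace ℝ E] {s : Set E} {f : E → ℝ} {f' : E →L[ℝ] ℝ} {a b : E}
    (hf : ConvexOn ℝ s f) (ha : a ∈ s) (hb : b ∈ s) (hf' : HasFDerivAt f f' a) :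
    f a + f' (b - a) ≤ f b := by
  have hline : ConvexOn ℝ (AffineMap.lineMap (k := ℝ) a b ⁻¹' s) (f ∘ AffineMap.lineMap a b) :=
    hf.comp_affineMap _
  have hderiv : HasDerivAt (f ∘ AffineMap.lineMap (k := ℝ) a b) (f' (b - a)) 0 := by
    rw [← AffineMap.lineMap_apply_zero a b (k := ℝ)] at hf'
    exact hf'.comp_hasDerivAt 0 AffineMap.hasDerivAt_lineMap
  have hslope := hline.le_slope_of_hasDerivAt (x := 0) (y := 1) (by simpa using ha)
    (by simpa using hb) zero_lt_one hderiv
  simp only [slope_def_field, Function.comp_apply, AffineMap.lineMap_apply_zero,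
    AffineMap.lineMap_apply_one, sub_zero, div_one] at hslope
  linarith

section InnerProductSpace

variable {E : Type*} [NormedAddCommGroup E] [InnerProductSpace ℝ E]

theorem real_inner_sub_sub_nonpos_of_forall_norm_sub_le {K : Set E} (hK : Convex ℝ K)
    {p w : E} (hp : p ∈ K) (hmin : ∀ z ∈ K, ‖p - w‖ ≤ ‖z - w‖) {z : E} (hz : z ∈ K) :
    ⟪w - p, z - p⟫ ≤ 0 := by
  have : Nonempty K := ⟨⟨p, hp⟩⟩
  refine (norm_eq_iInf_iff_real_inner_le_zero hK hp).1 (le_antisymm ?_ ?_) z hz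
  · exact le_ciInf fun y => by simpa only [norm_sub_rev w] using hmin y y.2
  · have hbdd : BddBelow (Set.range fun y : K => ‖w - y‖) :=
      ⟨0, Set.forall_mem_range.2 fun _ => norm_nonneg _⟩
    exact ciInf_le hbdd ⟨p, hp⟩

variable [CompleteSpace E]

theorem StrongConvexOn.add_inner_add_le_of_hasGradientAt {s : Set E} {μ : ℝ} {f : E → ℝ}
    {g a b : E} (hf : StrongConvexOn s μ f) (ha : a ∈ s) (hb : b ∈ s)
    (hg : HasGradientAt f g a) :
    f a + ⟪g, b - a⟫ + μ / 2 * ‖b - a‖ ^ 2 ≤ f b := by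
  have hsq := (hasStrictFDerivAt_norm_sq a).hasFDerivAt.const_mul (μ / 2)
  have := (strongConvexOn_iff_convex.mp hf).add_fderiv_sub_le_of_hasFDerivAt ha hb
    (hg.hasFDerivAt.sub hsq)
  simp only [sub_apply, smul_apply, innerSL_apply_apply,
    InnerProductSpace.toDual_apply_apply, smul_eq_mul, nsmul_eq_mul] at this
  have hnorm : ‖b - a‖ ^ 2 = ‖b‖ ^ 2 - ‖a‖ ^ 2 - 2 * ⟪a, b - a⟫ := by
    rw [norm_sub_sq_real, inner_sub_right, real_inner_self_eq_norm_sq, real_inner_comm]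
    ring
  rw [hnorm]
  push_cast at this
  linarith

theorem le_add_inner_add_sq_of_lipschitz_gradient {f : E → ℝ} {f' : E → E} {β : ℝ}
    (hf : ∀ x, HasGradientAt f (f' x) x) (hlip : ∀ x y, ‖f' x - f' y‖ ≤ β * ‖x - y‖)
    (a b : E) :
    f b ≤ f a + ⟪f' a, b - a⟫ + β / 2 * ‖b - a‖ ^ 2 := by
  set v := b - a
  let θ : ℝ → ℝ := fun t => f (a + t • v) - (t * ⟪f' a, v⟫ + β / 2 * t ^ 2 * ‖v‖ ^ 2)
  have hθ' : ∀ t, HasDerivAt θ (⟪f' (a + t • v) - f' a, v⟫ - β * t * ‖v‖ ^ 2) t := by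
    intro t
    have hline : HasDerivAt (fun t : ℝ => a + t • v) v t := by
      simpa using ((hasDerivAt_id t).smul_const v).const_add a
    have hpoly : HasDerivAt (fun t : ℝ => t * ⟪f' a, v⟫ + β / 2 * t ^ 2 * ‖v‖ ^ 2)
        (⟪f' a, v⟫ + β * t * ‖v‖ ^ 2) t := by
      refine (((hasDerivAt_id t).mul_const ⟪f' a, v⟫).add
        (((hasDerivAt_pow 2 t).const_mul (β / 2)).mul_const (‖v‖ ^ 2))).congr_deriv ?_
      simp only [Nat.cast_ofNat, Nat.add_one_sub_one, pow_one]
      ring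
    refine (((hf _).hasFDerivAt.comp_hasDerivAt t hline).sub hpoly).congr_deriv ?_
    rw [inner_sub_left, InnerProductSpace.toDual_apply_apply]
    ring
  have hslope : ∀ t ∈ interior (Set.Icc (0 : ℝ) 1),
      ⟪f' (a + t • v) - f' a, v⟫ - β * t * ‖v‖ ^ 2 ≤ 0 := by
    intro t ht
    rw [interior_Icc] at ht
    calc ⟪f' (a + t • v) - f' a, v⟫ - β * t * ‖v‖ ^ 2
        ≤ ‖f' (a + t • v) - f' a‖ * ‖v‖ - β * t * ‖v‖ ^ 2 := by
          gcongr; exact real_inner_le_norm _ _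
      _ ≤ β * ‖t • v‖ * ‖v‖ - β * t * ‖v‖ ^ 2 := by
        gcongr; simpa using hlip (a + t • v) a
      _ = 0 := by rw [norm_smul, Real.norm_of_nonneg ht.1.le]; ring
  have hanti : AntitoneOn θ (Set.Icc 0 1) :=
    antitoneOn_of_hasDerivWithinAt_nonpos (convex_Icc 0 1)
      (fun t _ => (hθ' t).continuousAt.continuousWithinAt)
      (fun t _ => (hθ' t).hasDerivWithinAt) hslope
  have := hanti (Set.left_mem_Icc.2 zero_le_one) (Set.right_mem_Icc.2 zero_le_one) zero_le_one
  simp only [θ, zero_smul, add_zero, one_smul, zero_mul] at this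
  rw [add_sub_cancel] at this
  linarith

theorem le_add_inner_add_sq_add_inner_of_projected_step {f : E → ℝ} {f' : E → E} {β : ℝ}
    (hβ : 0 < β) (hf : ∀ x, HasGradientAt f (f' x) x)
    (hlip : ∀ x y, ‖f' x - f' y‖ ≤ β * ‖x - y‖) {X : Set E} (hX : Convex ℝ X) {q g p z : E}
    (hp : p ∈ X) (hmin : ∀ y ∈ X, ‖p - (q - (1 / β) • g)‖ ≤ ‖y - (q - (1 / β) • g)‖)
    (hz : z ∈ X) :
    f p ≤ f q + ⟪f' q, z - q⟫ + β / 2 * ‖z - q‖ ^ 2 + ⟪f' q - g, p - z⟫ := by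
  have hdescent := le_add_inner_add_sq_of_lipschitz_gradient hf hlip q p
  have hvar := real_inner_sub_sub_nonpos_of_forall_norm_sub_le hX hp hmin hz
  rw [sub_right_comm, inner_sub_left, real_inner_smul_left, real_inner_comm] at hvar
  have hvar' : β * ⟪z - p, q - p⟫ ≤ ⟪g, z - p⟫ := by
    have h := mul_le_mul_of_nonneg_left hvar hβ.le
    rwa [mul_sub, ← mul_assoc, mul_one_div_cancel hβ.ne', one_mul, mul_zero, sub_nonpos] at h
  have hsplit : ⟪f' q, p - q⟫ = ⟪f' q, z - q⟫ + ⟪f' q - g, p - z⟫ - ⟪g, z - p⟫ := by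
    simp only [inner_sub_left, inner_sub_right]
    ring
  have hpolar : β / 2 * ‖z - q‖ ^ 2
      = β / 2 * ‖z - p‖ ^ 2 - β * ⟪z - p, q - p⟫ + β / 2 * ‖q - p‖ ^ 2 := by
    rw [← sub_sub_sub_cancel_right z q p, norm_sub_sq_real]
    ring
  rw [norm_sub_rev] at hdescent
  linarith [mul_nonneg hβ.le (sq_nonneg ‖z - p‖)]

theorem sub_le_mul_sub_add_of_projected_step {f : E → ℝ} {f' : E → E} {β μ ε : ℝ}
    (hμ : 0 ≤ μ) (hμβ : μ ≤ β) (hβ : 0 < β) (hf : ∀ x, HasGradientAt f (f' x) x)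
    (hlip : ∀ x y, ‖f' x - f' y‖ ≤ β * ‖x - y‖) {X : Set E} (hX : Convex ℝ X)
    (hsc : StrongConvexOn X μ f) {q g p w : E} (hq : q ∈ X) (hw : w ∈ X) (hp : p ∈ X)
    (hmin : ∀ y ∈ X, ‖p - (q - (1 / β) • g)‖ ≤ ‖y - (q - (1 / β) • g)‖)
    (herr₁ : ⟪f' q - g, p - q⟫ ≤ ε) (herr₂ : ⟪f' q - g, p - w⟫ ≤ ε) :
    f p - f w ≤ (1 - μ / β) * (f q - f w) + ε := by
  set l := μ / β with hl
  have hl₀ : 0 ≤ l := div_nonneg hμ hβ.le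
  have hl₁ : l ≤ 1 := div_le_one_of_le₀ hμβ hβ.le
  have hz := hX.add_smul_sub_mem hq hw ⟨hl₀, hl₁⟩
  have hstep := le_add_inner_add_sq_add_inner_of_projected_step hβ hf hlip hX hp hmin hz
  have hlower := hsc.add_inner_add_le_of_hasGradientAt hq hw (hf q)
  rw [add_sub_cancel_left, real_inner_smul_right, norm_smul, Real.norm_of_nonneg hl₀] at hstep
  have herr : ⟪f' q - g, p - (q + l • (w - q))⟫ ≤ ε := by
    have : p - (q + l • (w - q)) = (1 - l) • (p - q) + l • (p - w) := by module
    rw [this, inner_add_right, real_inner_smul_right, real_inner_smul_right]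
    linarith [mul_le_mul_of_nonneg_left herr₁ (sub_nonneg.2 hl₁),
      mul_le_mul_of_nonneg_left herr₂ hl₀]
  have hquad : β / 2 * (l * ‖w - q‖) ^ 2 = l * (μ / 2 * ‖w - q‖ ^ 2) := by
    rw [hl]; field_simp
  linarith [mul_le_mul_of_nonneg_left hlower hl₀]

end InnerProductSpace

theorem inexact_pgd_linear_convergence_general {n : ℕ} (C : EuclideanSpace ℝ (Fin n) → ℝ)
    (β' μ : ℝ) (hμ : 0 < μ) (hμβ : μ < β') (hdiff : Differentiable ℝ C)
    (hlip : ∀ z w, ‖gradient C z - gradient C w‖ ≤ β' * ‖z - w‖)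
    (hsc : ConvexOn ℝ Set.univ (fun z => C z - μ / 2 * ‖z‖ ^ 2))
    (X : Set (EuclideanSpace ℝ (Fin n)))
    (hXconv : Convex ℝ X)
    (proj : EuclideanSpace ℝ (Fin n) → EuclideanSpace ℝ (Fin n))
    (hproj : ∀ w, proj w ∈ X ∧ ∀ z ∈ X, ‖proj w - w‖ ≤ ‖z - w‖)
    (xstar : EuclideanSpace ℝ (Fin n)) (hxstar : xstar ∈ X)
    (ε : ℝ) (hε : 0 ≤ ε) (K : ℕ)
    (x g : ℕ → EuclideanSpace ℝ (Fin n)) (hx0 : x 0 ∈ X)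
    (hupd : ∀ j < K, x (j + 1) = proj (x j - (1 / β') • g j))
    (herr1 : ∀ j < K, ⟪gradient C (x j) - g j, x (j + 1) - x j⟫ ≤ ε)
    (herr2 : ∀ j < K, ⟪gradient C (x j) - g j, x (j + 1) - xstar⟫ ≤ ε) :
    C (x K) - C xstar ≤
      (1 / (1 + μ / (β' - μ))) ^ K * (C (x 0) - C xstar) +
        (1 + μ / (β' - μ)) / (μ / (β' - μ)) * ε := by
  have hβ : 0 < β' := hμ.trans hμβ
  have hrate : 1 / (1 + μ / (β' - μ)) = 1 - μ / β' := by
    field_simp [(sub_pos.2 hμβ).ne', hβ.ne']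
    ring
  have hconst : (1 + μ / (β' - μ)) / (μ / (β' - μ)) = β' / μ := by
    field_simp [(sub_pos.2 hμβ).ne']
    ring
  have hstrong : StrongConvexOn X μ C :=
    strongConvexOn_iff_convex.2 (hsc.subset (Set.subset_univ X) hXconv)
  have hmem : ∀ j < K, x j ∈ X := by
    rintro (_ | j) hj
    · exact hx0
    · exact hupd j (by omega) ▸ (hproj _).1
  rw [hrate, hconst]
  refine le_pow_mul_add_of_forall_le_mul_add (a := fun j => C (x j) - C xstar)
    (sub_nonneg.2 (div_le_one_of_le₀ hμβ.le hβ.le)) (by positivity) fun j hj => ?_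
  have hstep := sub_le_mul_sub_add_of_projected_step hμ.le hμβ.le hβ
    (fun z => (hdiff z).hasGradientAt) hlip hXconv hstrong (hmem j hj) hxstar
    (hupd j hj ▸ (hproj _).1) (hupd j hj ▸ (hproj _).2) (herr1 j hj) (herr2 j hj)
  have hε' : (1 - (1 - μ / β')) * (β' / μ * ε) = ε := by
    field_simp
    ring
  simpa only [sub_sub_sub_cancel_right, hε'] using hstep

/-- Linear convergence of projected inexact gradient descent: with
`0 < μ < β′`, `γ = μ/(β′ − μ)`, iterates `x^{j+1} = Π_X(x^j − (1/β′)g^j)` starting from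
`x⁰ ∈ X`, and inner-product error bounds
`⟨∇C(x^j) − g^j, x^{j+1} − x^j⟩ ≤ ε` and `⟨∇C(x^j) − g^j, x^{j+1} − x*⟩ ≤ ε` for all
`j < K`, one has
`C(x^K) − C(x*) ≤ (1/(1 + γ))^K (C(x⁰) − C(x*)) + ((1 + γ)/γ)ε`. -/
theorem inexact_pgd_linear_convergence {n : ℕ} (C : EuclideanSpace ℝ (Fin n) → ℝ)
    (β' μ : ℝ) (hμ : 0 < μ) (hμβ : μ < β') (hdiff : Differentiable ℝ C)
    (hlip : ∀ z w, ‖gradient C z - gradient C w‖ ≤ β' * ‖z - w‖)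
    (hsc : ConvexOn ℝ Set.univ (fun z => C z - μ / 2 * ‖z‖ ^ 2))
    (X : Set (EuclideanSpace ℝ (Fin n)))
    (hXne : X.Nonempty) (hXcl : IsClosed X) (hXconv : Convex ℝ X)
    (proj : EuclideanSpace ℝ (Fin n) → EuclideanSpace ℝ (Fin n))
    (hproj : ∀ w, proj w ∈ X ∧ ∀ z ∈ X, ‖proj w - w‖ ≤ ‖z - w‖)
    (xstar : EuclideanSpace ℝ (Fin n)) (hxstar : xstar ∈ X)
    (ε : ℝ) (hε : 0 ≤ ε) (K : ℕ)
    (x g : ℕ → EuclideanSpace ℝ (Fin n)) (hx0 : x 0 ∈ X)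
    (hupd : ∀ j < K, x (j + 1) = proj (x j - (1 / β') • g j))
    (herr1 : ∀ j < K, ⟪gradient C (x j) - g j, x (j + 1) - x j⟫ ≤ ε)
    (herr2 : ∀ j < K, ⟪gradient C (x j) - g j, x (j + 1) - xstar⟫ ≤ ε) :
    C (x K) - C xstar ≤
      (1 / (1 + μ / (β' - μ))) ^ K * (C (x 0) - C xstar) +
        (1 + μ / (β' - μ)) / (μ / (β' - μ)) * ε :=
  inexact_pgd_linear_convergence_general C β' μ hμ hμβ hdiff hlip hsc X hXconv proj hproj xstar
    hxstar ε hε K x g hx0 hupd herr1 herr2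
end
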